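/- Let q > 0 and suppose there exists a loop m for q of odd length. Then for every integer n ≥ 2 the weight w_{q/n} is not unique; that is, there exist two proper paths m', m'' for q/n with c(q/n, m') = c(q/n, m'') but w_{q/n}(m') ≠ w_{q/n}(m''). -/

import Mathlib

/-!
Zero-skipping `(…, x, 0, y, …) ↦ (…, x + y, …)` preserves paths and their values and changes
the length by `2`, so there is a proper loop `p` for `q` of odd length `2t + 1`. Multiplying by
`n` either the entries of `p` at even positions or those at odd positions gives two proper loops
for `q / n`: the value of each prefix of length `j + 1` gets multiplied by `n` or by `1`
according to the parity of `j`. Their weights differ by the factor `n^(t+1) / n^t = n`.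
-/


noncomputable def cfRev (q : ℝ) : List ℤ → ℝ
  | [] => 0
  | [a] => (a : ℝ)
  | a :: b :: rest => (a : ℝ) + 1 / (q * cfRev q (b :: rest))

/-- `cf q [m₀, …, m_k]` is the continued fraction `m_k + 1/(q m_{k-1} + q/( … + q/(q m₀)))`. -/
noncomputable def cf (q : ℝ) (l : List ℤ) : ℝ := cfRev q l.reverse

/-- `l` is a path for `q`: all denominators nonzero, i.e. every proper nonempty prefix
has nonzero continued-fraction value. -/
def IsPath (q : ℝ) (l : List ℤ) : Prop :=
  l ≠ [] ∧ ∀ t : List ℤ, t ≠ [] → t <+: l → t.length < l.length → cf q t ≠ 0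

/-- all entries except possibly the last are nonzero -/
def IsProper (l : List ℤ) : Prop := ∀ i, i + 1 < l.length → l.getD i 0 ≠ 0

def IsLoop (q : ℝ) (l : List ℤ) : Prop := IsPath q l ∧ cf q l = 0

/-- the weight `q^{k/2} ∏_{j<k} |c(q, m_j)|`. -/
noncomputable def weight (q : ℝ) (l : List ℤ) : ℝ :=
  Real.sqrt (q ^ (l.length - 1)) * ∏ j ∈ Finset.range (l.length - 1), |cf q (l.take (j + 1))|

/-- composition of paths -/
def comp (m n : List ℤ) : List ℤ := m.dropLast ++ (m.getLastD 0 + n.headD 0) :: n.tail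

/-- one step of zero-skipping -/
def SkipStep (l l' : List ℤ) : Prop :=
  ∃ (u v : List ℤ) (x y : ℤ), l = u ++ x :: 0 :: y :: v ∧ l' = u ++ (x + y) :: v

/-- the weight `w_q` is unique -/
def WeightUnique (q : ℝ) : Prop :=
  ∀ m n : List ℤ, IsPath q m → IsProper m → IsPath q n → IsProper n →
    cf q m = cf q n → weight q m = weight q n

section ContinuedFraction

variable {q : ℝ}

lemma cf_singleton (q : ℝ) (a : ℤ) : cf q [a] = a := rfl

lemma cf_append_singleton {l : List ℤ} (hl : l ≠ []) (a : ℤ) :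
    cf q (l ++ [a]) = a + 1 / (q * cf q l) := by
  obtain ⟨b, rest, h⟩ := List.exists_cons_of_ne_nil (List.reverse_ne_nil_iff.mpr hl)
  simp only [cf, List.reverse_append, List.reverse_singleton, List.singleton_append, h, cfRev]

lemma cf_append_add (u : List ℤ) (x y : ℤ) :
    cf q (u ++ [x + y]) = cf q (u ++ [x]) + y := by
  rcases eq_or_ne u [] with rfl | hu
  · simp only [List.nil_append, cf_singleton]; push_cast; ring
  · rw [cf_append_singleton hu, cf_append_singleton hu]; push_cast; ring

lemma cf_append_congr {l₁ l₂ : List ℤ} (h₁ : l₁ ≠ []) (h₂ : l₂ ≠ [])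
    (h : cf q l₁ = cf q l₂) (t : List ℤ) : cf q (l₁ ++ t) = cf q (l₂ ++ t) := by
  induction t using List.reverseRecOn with
  | nil => simpa
  | append_singleton t a ih =>
    rw [← List.append_assoc, ← List.append_assoc, cf_append_singleton (by simp [h₁]),
      cf_append_singleton (by simp [h₂]), ih]

-- Where `cf q (u ++ [x]) = 0`, both sides agree through the junk value `1 / 0 = 0`.
lemma cf_append_zero_cons (hq : q ≠ 0) (u v : List ℤ) (x y : ℤ) :
    cf q (u ++ x :: 0 :: y :: v) = cf q (u ++ (x + y) :: v) := by
  have hu0 : cf q (u ++ [x, 0]) = 1 / (q * cf q (u ++ [x])) := by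
    rw [show u ++ [x, 0] = u ++ [x] ++ [0] by simp, cf_append_singleton (by simp)]
    push_cast; ring
  have hskip : cf q (u ++ [x, 0, y]) = cf q (u ++ [x + y]) := by
    rw [show u ++ [x, 0, y] = u ++ [x, 0] ++ [y] by simp, cf_append_singleton (by simp), hu0,
      cf_append_add]
    field_simp
    ring
  simpa using cf_append_congr (by simp) (by simp) hskip v

end ContinuedFraction

lemma isPath_iff_take {q : ℝ} {l : List ℤ} :
    IsPath q l ↔ l ≠ [] ∧ ∀ j < l.length - 1, cf q (l.take (j + 1)) ≠ 0 := by
  refine and_congr_right fun hl => ⟨fun h j hj => ?_, fun h t ht htl hlen => ?_⟩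
  · exact h _ (by simp [hl]) (List.take_prefix _ _) (by simp; omega)
  · obtain ⟨j, hj⟩ := Nat.exists_eq_add_one_of_ne_zero (List.length_pos_iff.mpr ht).ne'
    rw [List.prefix_iff_eq_take.mp htl, hj]
    exact h j (by omega)

lemma weight_pos {q : ℝ} (hq : 0 < q) {l : List ℤ} (hl : IsPath q l) : 0 < weight q l := by
  refine mul_pos (Real.sqrt_pos.mpr (pow_pos hq _)) (Finset.prod_pos fun j hj => ?_)
  exact abs_pos.mpr ((isPath_iff_take.mp hl).2 j (Finset.mem_range.mp hj))

namespace SkipStep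

variable {q : ℝ} {l l' : List ℤ}

lemma length_eq (h : SkipStep l l') : l.length = l'.length + 2 := by
  obtain ⟨u, v, x, y, rfl, rfl⟩ := h
  simp; omega

lemma cf_eq (hq : q ≠ 0) (h : SkipStep l l') : cf q l' = cf q l := by
  obtain ⟨u, v, x, y, rfl, rfl⟩ := h
  exact (cf_append_zero_cons hq u v x y).symm

lemma isPath (hq : q ≠ 0) (h : SkipStep l l') (hl : IsPath q l) : IsPath q l' := by
  obtain ⟨u, v, x, y, rfl, rfl⟩ := h
  rw [isPath_iff_take] at hl ⊢
  refine ⟨by simp, fun j hj => ?_⟩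
  simp only [List.length_append, List.length_cons] at hl hj
  rcases lt_or_ge j u.length with hju | hju
  · have := hl.2 j (by omega)
    rwa [List.take_append_of_le_length (by omega)] at this ⊢
  · obtain ⟨i, rfl⟩ := Nat.exists_eq_add_of_le hju
    have := hl.2 (u.length + i + 2) (by omega)
    rw [show u.length + i + 2 + 1 = u.length + (i + 3) by omega, List.take_length_add_append,
      List.take_succ_cons, List.take_succ_cons, List.take_succ_cons,
      cf_append_zero_cons hq] at this
    rwa [add_assoc, List.take_length_add_append, List.take_succ_cons]

end SkipStep

lemma exists_skipStep_of_not_isProper {q : ℝ} {l : List ℤ} (hl : IsPath q l)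
    (h : ¬IsProper l) : ∃ l', SkipStep l l' := by
  simp only [IsProper, not_forall, not_not] at h
  obtain ⟨i, hi, hi0⟩ := h
  rw [List.getD_eq_getElem _ _ (by omega)] at hi0
  obtain ⟨j, rfl⟩ : ∃ j, i = j + 1 := by
    refine Nat.exists_eq_add_one_of_ne_zero fun hi' => ?_
    subst hi'
    have := (isPath_iff_take.mp hl).2 0 (by omega)
    obtain ⟨a, rest, rfl⟩ := List.exists_cons_of_length_pos (by omega : 0 < l.length)
    simp_all [cf_singleton]
  refine ⟨l.take j ++ (l[j] + l[j + 2]) :: l.drop (j + 3), l.take j, l.drop (j + 3), l[j], l[j + 2],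
    ?_, rfl⟩
  conv_lhs => rw [← List.take_append_drop j l]
  rw [List.drop_eq_getElem_cons (by omega), List.drop_eq_getElem_cons (by omega),
    List.drop_eq_getElem_cons (by omega), hi0]

lemma IsPath.exists_isProper {q : ℝ} (hq : q ≠ 0) {l : List ℤ} (hl : IsPath q l) :
    ∃ p, IsPath q p ∧ IsProper p ∧ cf q p = cf q l ∧ ∃ r, l.length = p.length + 2 * r := by
  induction hlen : l.length using Nat.strong_induction_on generalizing l with
  | _ N ih =>
    by_cases hprop : IsProper l
    · exact ⟨l, hl, hprop, rfl, 0, by omega⟩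
    obtain ⟨l', hstep⟩ := exists_skipStep_of_not_isProper hl hprop
    have hlen' := hstep.length_eq
    obtain ⟨p, hp, hpprop, hpcf, r, hr⟩ :=
      ih l'.length (by omega) (hstep.isPath hq hl) rfl
    exact ⟨p, hp, hpprop, hpcf.trans (hstep.cf_eq hq), r + 1, by omega⟩

def scaleAtParity (n : ℤ) (c : ℕ) (l : List ℤ) : List ℤ :=
  l.mapIdx fun i a => if i % 2 = c then n * a else a

section scaleAtParity

variable {q : ℝ} {n : ℤ} {c : ℕ} {l : List ℤ}

@[simp]
lemma length_scaleAtParity : (scaleAtParity n c l).length = l.length :=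
  List.length_mapIdx

lemma scaleAtParity_ne_nil (hl : l ≠ []) : scaleAtParity n c l ≠ [] :=
  List.mapIdx_ne_nil_iff.mpr hl

lemma take_scaleAtParity (k : ℕ) :
    (scaleAtParity n c l).take k = scaleAtParity n c (l.take k) := by
  apply List.ext_getElem?
  intro i
  simp only [scaleAtParity, List.getElem?_take, List.getElem?_mapIdx]
  split_ifs <;> simp

lemma cf_scaleAtParity (hn : n ≠ 0) (hc : c < 2) (hl : l ≠ []) :
    cf (q / n) (scaleAtParity n c l)
      = (if (l.length - 1) % 2 = c then (n : ℝ) else 1) * cf q l := by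
  have hn' : (n : ℝ) ≠ 0 := Int.cast_ne_zero.mpr hn
  induction l using List.reverseRecOn with
  | nil => exact absurd rfl hl
  | append_singleton l a ih =>
    rcases eq_or_ne l [] with rfl | hl'
    · interval_cases c <;> simp [scaleAtParity, cf_singleton]
    rw [scaleAtParity, List.mapIdx_concat, ← scaleAtParity,
      cf_append_singleton (scaleAtParity_ne_nil hl'), cf_append_singleton hl', ih hl']
    have hlen : 0 < l.length := List.length_pos_iff.mpr hl'
    simp only [List.length_append, List.length_singleton, Nat.add_sub_cancel]
    by_cases h : l.length % 2 = c
    · have h' : (l.length - 1) % 2 ≠ c := by omega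
      simp only [h, h', ↓reduceIte]
      push_cast
      field_simp
    · have h' : (l.length - 1) % 2 = c := by omega
      simp only [h, h', ↓reduceIte]
      field_simp

lemma abs_cf_take_scaleAtParity (hn : n ≠ 0) (hc : c < 2) {j : ℕ} (hj : j < l.length) :
    |cf (q / n) ((scaleAtParity n c l).take (j + 1))|
      = (if j % 2 = c then |(n : ℝ)| else 1) * |cf q (l.take (j + 1))| := by
  have hne : l.take (j + 1) ≠ [] := by simpa using List.ne_nil_of_length_pos (by omega)
  rw [take_scaleAtParity, cf_scaleAtParity hn hc hne, abs_mul, List.length_take,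
    Nat.min_eq_left (by omega), Nat.add_sub_cancel]
  split_ifs <;> simp

lemma IsPath.scaleAtParity (hn : n ≠ 0) (hc : c < 2) (hl : IsPath q l) :
    IsPath (q / n) (scaleAtParity n c l) := by
  rw [isPath_iff_take] at hl ⊢
  refine ⟨scaleAtParity_ne_nil hl.1, fun j hj => ?_⟩
  rw [length_scaleAtParity] at hj
  rw [← abs_ne_zero, abs_cf_take_scaleAtParity hn hc (by omega)]
  refine mul_ne_zero ?_ (abs_ne_zero.mpr (hl.2 j hj))
  split_ifs <;> simp [hn]

lemma IsProper.scaleAtParity (hn : n ≠ 0) (hl : IsProper l) : IsProper (scaleAtParity n c l) := by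
  intro i hi
  rw [length_scaleAtParity] at hi
  have := hl i hi
  rw [List.getD_eq_getElem _ _ (by omega)] at this
  rw [List.getD_eq_getElem _ _ (by rw [length_scaleAtParity]; omega)]
  simp only [_root_.scaleAtParity, List.getElem_mapIdx]
  split_ifs <;> simp [hn, this]

end scaleAtParity

lemma prod_range_odd_ite_mod_two {M : Type*} [CommMonoid M] (r : M) (t : ℕ) :
    ∏ j ∈ Finset.range (2 * t + 1), (if j % 2 = 0 then r else 1)
      = r * ∏ j ∈ Finset.range (2 * t + 1), (if j % 2 = 1 then r else 1) := by
  induction t with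
  | zero => simp
  | succ t ih =>
    rw [show 2 * (t + 1) + 1 = 2 * t + 1 + 1 + 1 by ring, Finset.prod_range_succ,
      Finset.prod_range_succ, Finset.prod_range_succ _ (2 * t + 1 + 1),
      Finset.prod_range_succ _ (2 * t + 1), ih]
    simp only [show (2 * t + 1) % 2 = 1 by omega, show (2 * t + 1 + 1) % 2 = 0 by omega,
      ↓reduceIte, zero_ne_one, one_ne_zero, mul_one]
    ac_rfl

lemma weight_scaleAtParity_zero {q : ℝ} {n : ℤ} {l : List ℤ} (hn : n ≠ 0)
    (hodd : Odd (l.length - 1)) :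
    weight (q / n) (scaleAtParity n 0 l) = |(n : ℝ)| * weight (q / n) (scaleAtParity n 1 l) := by
  have hfactor (c : ℕ) (hc : c < 2) :
      ∏ j ∈ Finset.range (l.length - 1), |cf (q / n) ((scaleAtParity n c l).take (j + 1))|
        = ∏ j ∈ Finset.range (l.length - 1),
            (if j % 2 = c then |(n : ℝ)| else 1) * |cf q (l.take (j + 1))| :=
    Finset.prod_congr rfl fun j hj =>
      abs_cf_take_scaleAtParity hn hc (by rw [Finset.mem_range] at hj; omega)
  obtain ⟨t, ht⟩ := hodd
  rw [weight, weight, length_scaleAtParity, length_scaleAtParity, hfactor 0 (by norm_num),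
    hfactor 1 (by norm_num), Finset.prod_mul_distrib, Finset.prod_mul_distrib, ht,
    prod_range_odd_ite_mod_two]
  ring

theorem stmt8 (q : ℝ) (hq : 0 < q) (m : List ℤ) (hm : IsLoop q m)
    (hodd : Odd (m.length - 1)) (n : ℕ) (hn : 2 ≤ n) :
    ∃ m' m'' : List ℤ, IsPath (q / n) m' ∧ IsProper m' ∧ IsPath (q / n) m'' ∧ IsProper m'' ∧
      cf (q / n) m' = cf (q / n) m'' ∧ weight (q / n) m' ≠ weight (q / n) m'' := by
  obtain ⟨p, hp, hpprop, hpcf, r, hr⟩ := hm.1.exists_isProper hq.ne'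
  have hpodd : Odd (p.length - 1) := by
    obtain ⟨t, ht⟩ := hodd
    exact ⟨t - r, by have := List.length_pos_iff.mpr hp.1; omega⟩
  have hn0 : (n : ℤ) ≠ 0 := by omega
  rw [← Int.cast_natCast n]
  have hloop (c : ℕ) (hc : c < 2) : cf (q / (n : ℤ)) (scaleAtParity n c p) = 0 := by
    rw [cf_scaleAtParity hn0 hc hp.1, hpcf, hm.2, mul_zero]
  refine ⟨scaleAtParity n 0 p, scaleAtParity n 1 p, hp.scaleAtParity hn0 (by norm_num),
    hpprop.scaleAtParity hn0, hp.scaleAtParity hn0 (by norm_num), hpprop.scaleAtParity hn0,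
    by rw [hloop 0 (by norm_num), hloop 1 (by norm_num)], ?_⟩
  have hpos :=
    weight_pos (div_pos hq (by positivity)) (hp.scaleAtParity hn0 (c := 1) (by norm_num))
  have hn1 : 1 < |((n : ℤ) : ℝ)| := by
    rw [Int.cast_natCast, Nat.abs_cast]
    exact_mod_cast hn
  rw [weight_scaleAtParity_zero hn0 hpodd]
  exact (lt_mul_of_one_lt_left hpos hn1).ne'
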